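/- There exist a constant C > 0 and a decoder D such that for all integers n ≥ 2, d ≥ 1, h ≥ 1 and every n-vertex finite simple graph G admitting a signed tree model of width at most d whose tree has depth at most h, there is a labeling of the vertices of G by binary strings of length at most C·d·h·log₂ n with which D correctly decides adjacency in G. -/

import Mathlib

/-- `G` has degeneracy at most `d`: every nonempty (induced) subgraph has a vertex of degree
at most `d`. -/
def DegenLE {V : Type*} (G : SimpleGraph V) (d : ℕ) : Prop :=
  ∀ s : Set V, s.Nonempty → ∃ v ∈ s, (G.neighborSet v ∩ s).ncard ≤ d

/-- Full rooted binary trees: every internal node has exactly two children. -/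
inductive BinTree where
  | leaf : BinTree
  | node : BinTree → BinTree → BinTree
deriving DecidableEq

namespace BinTree

/-- The subtree of a binary tree rooted at the node addressed by the path `p` from the root
(`false` = go to the left child, `true` = go to the right child), if it exists. -/
def subtreeAt : BinTree → List Bool → Option BinTree
  | t, [] => some t
  | leaf, _ :: _ => none
  | node l _, false :: p => l.subtreeAt p
  | node _ r, true :: p => r.subtreeAt p

/-- `p` addresses a node of `T`. -/
def IsNode (T : BinTree) (p : List Bool) : Prop := (T.subtreeAt p).isSome

/-- `p` addresses a leaf of `T`. -/
def IsLeafPos (T : BinTree) (p : List Bool) : Prop := T.subtreeAt p = some leaf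

/-- The depth of a binary tree: the maximum number of nodes on a root-to-leaf path. -/
def depth : BinTree → ℕ
  | leaf => 1
  | node l r => max l.depth r.depth + 1

/-- The total number of nodes of a binary tree. -/
def numNodes : BinTree → ℕ
  | leaf => 1
  | node l r => l.numNodes + r.numNodes + 1

/-- The list of (addresses of) leaves of a binary tree, read from left to right. -/
def leaves : BinTree → List (List Bool)
  | leaf => [[]]
  | node l r => l.leaves.map (false :: ·) ++ r.leaves.map (true :: ·)

/-- A binary tree is perfect if all its leaves are at the same depth. -/
def IsPerfect : BinTree → Prop
  | leaf => True
  | node l r => l.IsPerfect ∧ r.IsPerfect ∧ l.depth = r.depth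

/-- A binary tree is complete if all its levels are completely filled, except possibly the
last one, wherein leaves are left-aligned. -/
inductive IsComplete : BinTree → Prop
  | leaf : IsComplete leaf
  | nodeLeft (l r : BinTree) : IsComplete l → r.IsPerfect → l.depth = r.depth + 1 →
      IsComplete (node l r)
  | nodeRight (l r : BinTree) : l.IsPerfect → IsComplete r → l.depth = r.depth →
      IsComplete (node l r)

/-- With the leaves of `T` numbered `1, …, n` from left to right, `T.leafSet x` is the set of
numbers of the leaves of the subtree of `T` rooted at `x`. -/
def leafSet (T : BinTree) (x : List Bool) : Set ℕ :=
  {k | 1 ≤ k ∧ k ≤ T.leaves.length ∧ x <+: T.leaves.getD (k - 1) []}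

end BinTree

/-- Node addresses in a binary tree. -/
abbrev Pos := List Bool

/-- `u` is a strict ancestor of `v` (as tree addresses: a strict prefix). -/
def SAnc (u v : Pos) : Prop := u <+: v ∧ u ≠ v

/-- `{u, v}` is a transversal pair of `T`: both are nodes of `T` and neither is an ancestor
of the other. -/
def Transversal (T : BinTree) (u v : Pos) : Prop :=
  T.IsNode u ∧ T.IsNode v ∧ ¬ u <+: v ∧ ¬ v <+: u

/-- The ancestor relation on unordered pairs: `{u, v} ⪯ {u', v'}`. -/
def PairLE (u v u' v' : Pos) : Prop :=
  (u <+: u' ∧ v <+: v') ∨ (v <+: u' ∧ u <+: v')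

/-- A signed tree model: a full binary rooted tree `T` together with disjoint sets `A`
(transversal anti-edges) and `B` (transversal edges) of transversal pairs of `T`, no two of
which cross. -/
structure STM where
  tree : BinTree
  A : Set (Sym2 Pos)
  B : Set (Sym2 Pos)
  disjAB : Disjoint A B
  transversal : ∀ e ∈ A ∪ B, ∀ u v : Pos, e = s(u, v) → Transversal tree u v
  noCross : ∀ e ∈ A ∪ B, ∀ e' ∈ A ∪ B, ∀ u v u' v' : Pos,
    e = s(u, v) → e' = s(u', v') → ¬ (SAnc u u' ∧ SAnc v' v)

namespace STM

/-- The adjacency relation defined by a signed tree model on the leaves of its tree: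
leaves `u, v` are adjacent iff there is `{u', v'} ∈ B` with `{u', v'} ⪯ {u, v}` and no
`{u'', v''} ∈ A` satisfies `{u', v'} ≺ {u'', v''} ⪯ {u, v}`. -/
def LeafAdj (M : STM) (u v : Pos) : Prop :=
  M.tree.IsLeafPos u ∧ M.tree.IsLeafPos v ∧
  ∃ u' v' : Pos, s(u', v') ∈ M.B ∧ PairLE u' v' u v ∧
    ¬ ∃ u'' v'' : Pos, s(u'', v'') ∈ M.A ∧ PairLE u' v' u'' v'' ∧
      s(u', v') ≠ s(u'', v'') ∧ PairLE u'' v'' u v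

/-- `M` is a signed tree model of the graph `G`: there is a bijection between the vertices of
`G` and the leaves of the tree of `M` under which adjacency in `G` coincides with the
adjacency defined by `M`. -/
def Models {V : Type*} (M : STM) (G : SimpleGraph V) : Prop :=
  ∃ f : V → Pos, Function.Injective f ∧ (∀ v, M.tree.IsLeafPos (f v)) ∧
    (∀ p : Pos, M.tree.IsLeafPos p → ∃ v, f v = p) ∧
    ∀ u v : V, G.Adj u v ↔ M.LeafAdj (f u) (f v)

/-- The auxiliary graph of a signed tree model: vertex set the nodes of the tree, edge set
`A ∪ B`. -/
def auxGraph (M : STM) : SimpleGraph Pos where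
  Adj u v := u ≠ v ∧ s(u, v) ∈ M.A ∪ M.B
  symm := ⟨by
    rintro u v ⟨h1, h2⟩
    exact ⟨h1.symm, by rwa [Sym2.eq_swap]⟩⟩
  loopless := ⟨fun u h => h.1 rfl⟩

/-- The width of a signed tree model is at most `d`: the graph on the nodes of the tree with
edge set `A ∪ B` has degeneracy at most `d`. -/
def WidthLE (M : STM) (d : ℕ) : Prop := DegenLE M.auxGraph d

/-- A signed tree model is clean if every pair of siblings is in `A ∪ B`. -/
def Clean (M : STM) : Prop :=
  ∀ p : Pos, M.tree.IsNode (p ++ [false]) →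
    s(p ++ [false], p ++ [true]) ∈ M.A ∪ M.B

end STM

/-!
Orient the auxiliary graph `A ∪ B` so that every node has out-degree at most `d`, as degeneracy
allows. A leaf `u` stores the numbers of its at most `h` ancestors and, for every ancestor `x` and
out-neighbour `y` of `x`, the depths of `x` and `y`, the number of `y` and whether `xy ∈ B`: at
most `d h` records of `O(log n)` bits, written in a self-delimiting binary code. For two leaves
`u, v`, each pair of `A ∪ B` with one node above `u` and the other above `v` is stored at `u` or
at `v`, and is recognised there because the number of its far end occurs in the other label.
Ancestors of a leaf are determined by their depths, so this recovers the depth profiles of all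
pairs above `{u, v}`, and `u, v` are adjacent iff some edge of `B` among them is not dominated by
an anti-edge of `A`.
-/

open Function

section PrefixCode

variable {α β : Type*}

/-- Injectivity and prefix-freeness together: a codeword can be split off the front of any
concatenation. -/
def IsPrefixCode (e : α → List Bool) : Prop :=
  ∀ a b s t, e a ++ s = e b ++ t → a = b ∧ s = t

namespace IsPrefixCode

variable {e : α → List Bool}

theorem injective (he : IsPrefixCode e) : Injective e :=
  fun a b h => (he a b [] [] (by rw [h])).1

theorem comp (he : IsPrefixCode e) {f : β → α} (hf : Injective f) : IsPrefixCode (e ∘ f) :=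
  fun a b s t h => (he _ _ s t h).imp_left (@hf a b)

theorem append {e' : β → List Bool} (he : IsPrefixCode e) (he' : IsPrefixCode e') :
    IsPrefixCode fun p : α × β => e p.1 ++ e' p.2 := by
  rintro ⟨a, b⟩ ⟨a', b'⟩ s t h
  simp only [List.append_assoc] at h
  obtain ⟨rfl, h'⟩ := he _ _ _ _ h
  obtain ⟨rfl, rfl⟩ := he' _ _ _ _ h'
  exact ⟨rfl, rfl⟩

end IsPrefixCode

theorem isPrefixCode_singleton : IsPrefixCode fun b : Bool => [b] :=
  fun a b s t h => by simpa using h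

def encNat (m : ℕ) : List Bool :=
  ((Nat.digits 2 m).flatMap fun k => [true, k == 1]) ++ [false]

theorem digitCode_cancel {L₁ L₂ : List ℕ} {s t : List Bool} (h₁ : ∀ k ∈ L₁, k < 2)
    (h₂ : ∀ k ∈ L₂, k < 2)
    (h : (L₁.flatMap fun k => [true, k == 1]) ++ false :: s =
      (L₂.flatMap fun k => [true, k == 1]) ++ false :: t) : L₁ = L₂ ∧ s = t := by
  induction L₁ generalizing L₂ with
  | nil => cases L₂ <;> simp_all
  | cons k₁ L₁ ih =>
    cases L₂ with
    | nil => simp at h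
    | cons k₂ L₂ =>
      simp only [List.flatMap_cons, List.cons_append, List.nil_append, List.cons.injEq] at h
      obtain ⟨-, hk, h⟩ := h
      have hk₁ := h₁ k₁ List.mem_cons_self
      have hk₂ := h₂ k₂ List.mem_cons_self
      obtain ⟨rfl, rfl⟩ := ih (fun k hk => h₁ k (List.mem_cons_of_mem _ hk))
        (fun k hk => h₂ k (List.mem_cons_of_mem _ hk)) h
      refine ⟨?_, rfl⟩
      congr 1
      interval_cases k₁ <;> interval_cases k₂ <;> simp_all

theorem isPrefixCode_encNat : IsPrefixCode encNat := fun a b s t h => by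
  simp only [encNat, List.append_assoc, List.singleton_append] at h
  obtain ⟨hd, hst⟩ := digitCode_cancel (fun _ => Nat.digits_lt_base one_lt_two)
    (fun _ => Nat.digits_lt_base one_lt_two) h
  exact ⟨Nat.digits_inj_iff.mp hd, hst⟩

theorem length_encNat_le {m k : ℕ} (h : m < 2 ^ k) : (encNat m).length ≤ 2 * k + 1 := by
  have := (Nat.digits_length_le_iff one_lt_two m).mpr h
  simp only [encNat, List.length_append, List.length_flatMap, List.length_cons, List.length_nil,
    List.map_const', List.sum_replicate, smul_eq_mul]
  omega

theorem length_encNat_le_self (m : ℕ) : (encNat m).length ≤ 2 * m + 1 :=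
  length_encNat_le Nat.lt_two_pow_self

theorem length_encNat_le_log {m n : ℕ} (h : m < 2 * n) :
    (encNat m).length ≤ 2 * Nat.log 2 n + 5 := by
  have := Nat.lt_pow_succ_log_self one_lt_two n
  exact length_encNat_le (k := Nat.log 2 n + 2) (by rw [pow_succ]; omega)

def listCode (e : α → List Bool) (L : List α) : List Bool :=
  encNat L.length ++ L.flatMap e

theorem IsPrefixCode.flatMap_cancel {e : α → List Bool} (he : IsPrefixCode e)
    {L₁ L₂ : List α} {s t : List Bool} (hlen : L₁.length = L₂.length)
    (h : L₁.flatMap e ++ s = L₂.flatMap e ++ t) : L₁ = L₂ ∧ s = t := by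
  induction L₁ generalizing L₂ with
  | nil => cases L₂ <;> simp_all
  | cons a L₁ ih =>
    cases L₂ with
    | nil => simp at hlen
    | cons b L₂ =>
      simp only [List.flatMap_cons, List.append_assoc] at h
      obtain ⟨rfl, h'⟩ := he _ _ _ _ h
      obtain ⟨rfl, rfl⟩ := ih (by simpa using hlen) h'
      exact ⟨rfl, rfl⟩

theorem IsPrefixCode.listCode {e : α → List Bool} (he : IsPrefixCode e) :
    IsPrefixCode (listCode e) := by
  intro L₁ L₂ s t h
  simp only [_root_.listCode, List.append_assoc] at h
  obtain ⟨hlen, h'⟩ := isPrefixCode_encNat _ _ _ _ h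
  exact he.flatMap_cancel hlen h'

theorem length_listCode_le {e : α → List Bool} {L : List α} {c : ℕ}
    (h : ∀ a ∈ L, (e a).length ≤ c) :
    (listCode e L).length ≤ (encNat L.length).length + L.length * c := by
  rw [listCode, List.length_append, List.length_flatMap]
  have := List.sum_le_card_nsmul (L.map fun a => (e a).length) c (by simpa using h)
  simp only [List.length_map, smul_eq_mul] at this
  omega

end PrefixCode

namespace BinTree

def nodes : BinTree → List Pos
  | leaf => [[]]
  | node l r => [] :: (l.nodes.map (false :: ·) ++ r.nodes.map (true :: ·))

variable {T : BinTree} {p q : Pos}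

theorem mem_nodes_iff : p ∈ T.nodes ↔ T.IsNode p := by
  induction T generalizing p with
  | leaf => cases p <;> simp [nodes, IsNode, subtreeAt]
  | node l r ihl ihr =>
    rcases p with _ | ⟨_ | _, p⟩ <;> simp [nodes, IsNode, subtreeAt, ihl, ihr]

theorem mem_leaves_iff : p ∈ T.leaves ↔ T.IsLeafPos p := by
  induction T generalizing p with
  | leaf => cases p <;> simp [leaves, IsLeafPos, subtreeAt]
  | node l r ihl ihr =>
    rcases p with _ | ⟨_ | _, p⟩ <;> simp [leaves, IsLeafPos, subtreeAt, ihl, ihr]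

theorem nodup_leaves (T : BinTree) : T.leaves.Nodup := by
  induction T with
  | leaf => simp [leaves]
  | node l r ihl ihr =>
    refine List.Nodup.append (ihl.map List.cons_injective) (ihr.map List.cons_injective) ?_
    simp [List.Disjoint]

theorem length_nodes_add_one (T : BinTree) : T.nodes.length + 1 = 2 * T.leaves.length := by
  induction T with
  | leaf => simp [nodes, leaves]
  | node l r ihl ihr =>
    simp only [nodes, leaves, List.length_cons, List.length_append, List.length_map]
    omega

theorem depth_le_length_nodes (T : BinTree) : T.depth ≤ T.nodes.length := by
  induction T with
  | leaf => simp [nodes, depth]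
  | node l r ihl ihr =>
    simp only [nodes, depth, List.length_cons, List.length_append, List.length_map]
    omega

theorem IsNode.length_lt_depth (hp : T.IsNode p) : p.length < T.depth := by
  induction T generalizing p with
  | leaf => cases p <;> simp_all [IsNode, subtreeAt, depth]
  | node l r ihl ihr =>
    rcases p with _ | ⟨_ | _, p⟩
    · simp [depth]
    · have := ihl hp
      simp only [List.length_cons, depth]
      omega
    · have := ihr hp
      simp only [List.length_cons, depth]
      omega

theorem IsNode.of_prefix (hq : T.IsNode q) (hpq : p <+: q) : T.IsNode p := by
  induction T generalizing p q with
  | leaf => cases q <;> simp_all [IsNode, subtreeAt]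
  | node l r ihl ihr =>
    obtain ⟨w, rfl⟩ := hpq
    rcases p with _ | ⟨_ | _, p⟩
    · simp [IsNode, subtreeAt]
    · exact ihl (q := p ++ w) hq (List.prefix_append p w)
    · exact ihr (q := p ++ w) hq (List.prefix_append p w)

theorem IsLeafPos.isNode (hp : T.IsLeafPos p) : T.IsNode p := by
  rw [IsNode, show T.subtreeAt p = some leaf from hp]
  rfl

theorem IsNode.length_lt_two_mul (hp : T.IsNode p) :
    p.length < 2 * T.leaves.length := by
  have := hp.length_lt_depth
  have := T.depth_le_length_nodes
  have := T.length_nodes_add_one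
  omega

theorem idxOf_nodes_lt_two_mul (hp : T.IsNode p) :
    T.nodes.idxOf p < 2 * T.leaves.length := by
  have := List.idxOf_lt_length_of_mem (mem_nodes_iff.mpr hp)
  have := T.length_nodes_add_one
  omega

end BinTree

/-- Peeling off a vertex of degree at most `d` and orienting its edges away from it. -/
theorem DegenLE.exists_orientation {V : Type*} {G : SimpleGraph V} {d : ℕ} (hG : DegenLE G d)
    (s : Finset V) :
    ∃ out : V → Finset V, (∀ v, (out v).card ≤ d) ∧ (∀ v, ∀ w ∈ out v, G.Adj v w) ∧
      ∀ v ∈ s, ∀ w ∈ s, G.Adj v w → w ∈ out v ∨ v ∈ out w := by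
  classical
  induction s using Finset.strongInduction with | H s ih => ?_
  rcases s.eq_empty_or_nonempty with rfl | hne
  · exact ⟨fun _ => ∅, by simp, by simp, by simp⟩
  obtain ⟨v, hv, hdeg⟩ := hG s (by exact_mod_cast hne)
  obtain ⟨out, hcard, hadj, hcover⟩ := ih (s.erase v) (Finset.erase_ssubset hv)
  have hcard_v : (s.filter (G.Adj v)).card ≤ d := by
    convert hdeg using 1
    rw [← Set.ncard_coe_finset]
    congr 1
    ext w
    simp [and_comm]
  refine ⟨Function.update out v (s.filter (G.Adj v)), fun w => ?_, fun w => ?_, ?_⟩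
  · rcases eq_or_ne w v with rfl | hw
    · simpa using hcard_v
    · simpa [hw] using hcard w
  · rcases eq_or_ne w v with rfl | hw
    · simp
    · simpa [hw] using hadj w
  · intro a ha b hb hab
    by_cases hav : a = v
    · subst hav; simp [hb, hab]
    by_cases hbv : b = v
    · subst hbv; simp [ha, hab.symm]
    simpa [hav, hbv] using hcover a (by simp [ha, hav]) b (by simp [hb, hbv]) hab

/-- What a leaf `u` stores about an edge or anti-edge `{x, y}` with `x` an ancestor of `u` and
the pair oriented from `x` to `y`: the depths of `x` and `y`, the number of the node `y`, and
whether `{x, y}` is an edge. -/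
structure EdgeRecord where
  srcDepth : ℕ
  tgtDepth : ℕ
  tgtId : ℕ
  isEdge : Bool

structure LabelData where
  ancIds : List ℕ
  records : List EdgeRecord

def EdgeRecord.encode (r : EdgeRecord) : List Bool :=
  encNat r.srcDepth ++ encNat r.tgtDepth ++ encNat r.tgtId ++ [r.isEdge]

theorem EdgeRecord.isPrefixCode_encode : IsPrefixCode EdgeRecord.encode :=
  (((isPrefixCode_encNat.append isPrefixCode_encNat).append isPrefixCode_encNat).append
    isPrefixCode_singleton).comp
    (f := fun r : EdgeRecord => (((r.srcDepth, r.tgtDepth), r.tgtId), r.isEdge))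
    (by rintro ⟨⟩ ⟨⟩ h; simp_all)

namespace LabelData

def encode (p : LabelData) : List Bool :=
  listCode encNat p.ancIds ++ listCode EdgeRecord.encode p.records

theorem encode_injective : Injective encode :=
  ((isPrefixCode_encNat.listCode.append EdgeRecord.isPrefixCode_encode.listCode).comp
    (f := fun p : LabelData => (p.ancIds, p.records))
    (by rintro ⟨⟩ ⟨⟩ h; simp_all)).injective

def detectFrom (p q : LabelData) : List (ℕ × ℕ × Bool) :=
  (p.records.filter (·.tgtId ∈ q.ancIds)).map fun r => (r.srcDepth, r.tgtDepth, r.isEdge)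

def detect (p q : LabelData) : List (ℕ × ℕ × Bool) :=
  p.detectFrom q ++ (q.detectFrom p).map fun e => (e.2.1, e.1, e.2.2)

structure Fits (n d h : ℕ) (p : LabelData) : Prop where
  length_ancIds : p.ancIds.length ≤ h
  length_records : p.records.length ≤ h * d
  ancIds_lt : ∀ k ∈ p.ancIds, k < 2 * n
  records_lt : ∀ r ∈ p.records, r.srcDepth < 2 * n ∧ r.tgtDepth < 2 * n ∧ r.tgtId < 2 * n

theorem Fits.length_encode_le_nat {n d h : ℕ} {p : LabelData} (hp : p.Fits n d h)
    (hd : 1 ≤ d) (hh : 1 ≤ h) : p.encode.length ≤ h * d * (8 * Nat.log 2 n + 27) := by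
  set K := 2 * Nat.log 2 n + 5
  have hanc := length_listCode_le (e := encNat) (c := K)
    fun k hk => length_encNat_le_log (hp.ancIds_lt k hk)
  have hrec := length_listCode_le (e := EdgeRecord.encode) (c := 3 * K + 1) fun r hr => by
    obtain ⟨h₁, h₂, h₃⟩ := hp.records_lt r hr
    have := length_encNat_le_log h₁
    have := length_encNat_le_log h₂
    have := length_encNat_le_log h₃
    simp only [EdgeRecord.encode, List.length_append, List.length_singleton]
    omega
  have h₁ := length_encNat_le_self p.ancIds.length
  have h₂ := length_encNat_le_self p.records.length
  have hA : p.ancIds.length ≤ h * d := hp.length_ancIds.trans (Nat.le_mul_of_pos_right h hd)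
  have h₃ : p.ancIds.length * K ≤ h * d * K := Nat.mul_le_mul_right K hA
  have h₄ : p.records.length * (3 * K + 1) ≤ h * d * (3 * K + 1) :=
    Nat.mul_le_mul_right _ hp.length_records
  have h₅ : 1 ≤ h * d := Nat.one_le_iff_ne_zero.mpr (by positivity)
  have hsplit : h * d * (8 * Nat.log 2 n + 27) = h * d * K + h * d * (3 * K + 1) + 6 * (h * d) := by
    simp only [K]; ring
  rw [encode, List.length_append, hsplit]
  have := hp.length_records
  omega

theorem Fits.length_encode_le {n d h : ℕ} {p : LabelData} (hp : p.Fits n d h) (hn : 2 ≤ n)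
    (hd : 1 ≤ d) (hh : 1 ≤ h) : (p.encode.length : ℝ) ≤ 35 * d * h * Real.logb 2 n := by
  have hlog : 1 ≤ Nat.log 2 n := Nat.le_log_of_pow_le one_lt_two (by simpa using hn)
  have hlen : p.encode.length ≤ d * h * (35 * Nat.log 2 n) :=
    (hp.length_encode_le_nat hd hh).trans (by rw [mul_comm d h]; gcongr; omega)
  calc (p.encode.length : ℝ) ≤ d * h * (35 * Nat.log 2 n) := by exact_mod_cast hlen
    _ ≤ d * h * (35 * Real.logb 2 n) := by
      gcongr
      exact_mod_cast Real.natLog_le_logb n 2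
    _ = 35 * d * h * Real.logb 2 n := by ring

end LabelData

def HasUndominatedEdge (S : Set (ℕ × ℕ × Bool)) : Prop :=
  ∃ i j, (i, j, true) ∈ S ∧
    ∀ i' j', (i', j', false) ∈ S → i ≤ i' → j ≤ j' → i = i' ∧ j = j'

open Classical in
noncomputable def decoder (a b : List Bool) : Bool :=
  decide (∃ p q : LabelData, p.encode = a ∧ q.encode = b ∧
    HasUndominatedEdge {e | e ∈ p.detect q})

theorem decoder_encode_eq_true_iff (p q : LabelData) :
    decoder p.encode q.encode = true ↔ HasUndominatedEdge {e | e ∈ p.detect q} := by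
  simp only [decoder, decide_eq_true_eq]
  constructor
  · rintro ⟨p', q', hp, hq, h⟩
    rwa [LabelData.encode_injective hp, LabelData.encode_injective hq] at h
  · exact fun h => ⟨p, q, rfl, rfl, h⟩

namespace STM

open Classical

variable {M : STM} {u v x y z : Pos}

def profile (M : STM) (u v : Pos) : Set (ℕ × ℕ × Bool) :=
  {e | ∃ x y, s(x, y) ∈ M.A ∪ M.B ∧ x <+: u ∧ y <+: v ∧
    e = (x.length, y.length, decide (s(x, y) ∈ M.B))}

theorem not_prefix_of_mem (he : s(x, y) ∈ M.A ∪ M.B) (hx : x <+: z) (hy : y <+: z) : False := by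
  obtain ⟨-, -, hxy, hyx⟩ := M.transversal _ he x y rfl
  rcases List.prefix_or_prefix_of_prefix hx hy with h | h
  exacts [hxy h, hyx h]

theorem isNode_snd_of_mem (he : s(x, y) ∈ M.A ∪ M.B) : M.tree.IsNode y :=
  (M.transversal _ he x y rfl).2.1

theorem mem_A_of_decide_eq_false (he : s(x, y) ∈ M.A ∪ M.B)
    (hB : decide (s(x, y) ∈ M.B) = false) :
    s(x, y) ∈ M.A := by
  simpa using he.resolve_right (by simpa using hB)

/-- The two nodes of a pair are incomparable, so a pair below `{u, v}` has exactly one node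
above `u`. -/
theorem leafAdj_iff_exists_oriented :
    M.LeafAdj u v ↔ M.tree.IsLeafPos u ∧ M.tree.IsLeafPos v ∧
      ∃ x y, s(x, y) ∈ M.B ∧ x <+: u ∧ y <+: v ∧ ∀ x' y', s(x', y') ∈ M.A →
        x <+: x' → y <+: y' → x' <+: u → y' <+: v → s(x, y) = s(x', y') := by
  refine and_congr_right fun _ => and_congr_right fun _ => ⟨?_, ?_⟩
  · rintro ⟨x, y, hB, (⟨hx, hy⟩ | ⟨hy, hx⟩), hmax⟩
    · refine ⟨x, y, hB, hx, hy, fun x' y' hA hxx' hyy' hx' hy' => ?_⟩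
      by_contra hne
      exact hmax ⟨x', y', hA, .inl ⟨hxx', hyy'⟩, hne, .inl ⟨hx', hy'⟩⟩
    · refine ⟨y, x, Sym2.eq_swap ▸ hB, hy, hx, fun x' y' hA hyx' hxy' hx' hy' => ?_⟩
      by_contra hne
      exact hmax ⟨x', y', hA, .inr ⟨hyx', hxy'⟩, fun h => hne (h ▸ Sym2.eq_swap),
        .inl ⟨hx', hy'⟩⟩
  · rintro ⟨x, y, hB, hx, hy, hmax⟩
    refine ⟨x, y, hB, .inl ⟨hx, hy⟩, ?_⟩
    rintro ⟨x', y', hA, hle, hne, hle'⟩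
    have hAB : s(x, y) ∈ M.A ∪ M.B := .inr hB
    rcases hle' with ⟨hx', hy'⟩ | ⟨hy', hx'⟩ <;>
      rcases hle with ⟨h₁, h₂⟩ | ⟨h₁, h₂⟩
    · exact hne (hmax x' y' hA h₁ h₂ hx' hy')
    · exact not_prefix_of_mem hAB hx (h₁.trans hx')
    · exact not_prefix_of_mem hAB (h₁.trans hx') hy
    · exact hne ((hmax y' x' (Sym2.eq_swap ▸ hA) h₂ h₁ hy' hx').trans Sym2.eq_swap)

theorem leafAdj_iff_hasUndominatedEdge (hu : M.tree.IsLeafPos u) (hv : M.tree.IsLeafPos v) :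
    M.LeafAdj u v ↔ HasUndominatedEdge (M.profile u v) := by
  rw [leafAdj_iff_exists_oriented, and_iff_right hu, and_iff_right hv]
  constructor
  · rintro ⟨x, y, hB, hx, hy, hmax⟩
    refine ⟨x.length, y.length, ⟨x, y, .inr hB, hx, hy, by simpa using hB⟩, ?_⟩
    rintro _ _ ⟨x', y', he, hx', hy', heq⟩ hi hj
    simp only [Prod.mk.injEq] at heq
    obtain ⟨rfl, rfl, hsign⟩ := heq
    have hA := mem_A_of_decide_eq_false he hsign.symm
    have heq := hmax x' y' hA (List.prefix_of_prefix_length_le hx hx' hi)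
      (List.prefix_of_prefix_length_le hy hy' hj) hx' hy'
    exact absurd (heq ▸ hB) (Set.disjoint_left.mp M.disjAB hA)
  · rintro ⟨_, _, ⟨x, y, he, hx, hy, heq⟩, hmin⟩
    simp only [Prod.mk.injEq] at heq
    obtain ⟨rfl, rfl, hsign⟩ := heq
    refine ⟨x, y, by simpa using hsign.symm, hx, hy, fun x' y' hA hxx' hyy' hx' hy' => ?_⟩
    obtain ⟨hi, hj⟩ := hmin x'.length y'.length
      ⟨x', y', .inl hA, hx', hy', by simpa using Set.disjoint_left.mp M.disjAB hA⟩
      hxx'.length_le hyy'.length_le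
    rw [hxx'.eq_of_length hi, hyy'.eq_of_length hj]

/-- The label of a node `u`, for a numbering `num` of the nodes and an orientation `out` of the
pairs of `A ∪ B`. -/
noncomputable def labelData (M : STM) (num : Pos → ℕ) (out : Pos → Finset Pos) (u : Pos) :
    LabelData where
  ancIds := u.inits.map num
  records := u.inits.flatMap fun x => (out x).toList.map fun y =>
    ⟨x.length, y.length, num y, decide (s(x, y) ∈ M.B)⟩

section Labeling

variable {num : Pos → ℕ} {out : Pos → Finset Pos}

theorem num_mem_ancIds_iff (hnum : Set.InjOn num {p | M.tree.IsNode p})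
    (hy : M.tree.IsNode y) (hv : M.tree.IsNode v) :
    num y ∈ (M.labelData num out v).ancIds ↔ y <+: v := by
  simp only [labelData, List.mem_map, List.mem_inits]
  constructor
  · rintro ⟨y', hy', h⟩
    rwa [← hnum (hv.of_prefix hy') hy h]
  · exact fun h => ⟨y, h, rfl⟩

theorem mem_detectFrom_labelData_iff (hnum : Set.InjOn num {p | M.tree.IsNode p})
    (hout : ∀ x, ∀ y ∈ out x, M.auxGraph.Adj x y) (hv : M.tree.IsNode v)
    {e : ℕ × ℕ × Bool} :
    e ∈ (M.labelData num out u).detectFrom (M.labelData num out v) ↔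
      ∃ x y, y ∈ out x ∧ x <+: u ∧ y <+: v ∧
        e = (x.length, y.length, decide (s(x, y) ∈ M.B)) := by
  simp only [LabelData.detectFrom, List.mem_map, List.mem_filter, decide_eq_true_eq]
  constructor
  · rintro ⟨r, ⟨hr, hanc⟩, rfl⟩
    simp only [labelData, List.mem_flatMap, List.mem_inits, List.mem_map, Finset.mem_toList] at hr
    obtain ⟨x, hx, y, hy, rfl⟩ := hr
    have hy_node : M.tree.IsNode y := isNode_snd_of_mem (hout x y hy).2
    exact ⟨x, y, hy, hx, (num_mem_ancIds_iff hnum hy_node hv).mp hanc, rfl⟩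
  · rintro ⟨x, y, hy, hx, hyv, rfl⟩
    have hy_node : M.tree.IsNode y := isNode_snd_of_mem (hout x y hy).2
    refine ⟨⟨x.length, y.length, num y, decide (s(x, y) ∈ M.B)⟩,
      ⟨?_, (num_mem_ancIds_iff hnum hy_node hv).mpr hyv⟩, rfl⟩
    simp only [labelData, List.mem_flatMap, List.mem_inits, List.mem_map, Finset.mem_toList]
    exact ⟨x, hx, y, hy, rfl⟩

theorem detect_labelData (hnum : Set.InjOn num {p | M.tree.IsNode p})
    (hout : ∀ x, ∀ y ∈ out x, M.auxGraph.Adj x y)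
    (hcover : ∀ x y, M.tree.IsNode x → M.tree.IsNode y → M.auxGraph.Adj x y →
      y ∈ out x ∨ x ∈ out y)
    (hu : M.tree.IsNode u) (hv : M.tree.IsNode v) :
    {e | e ∈ (M.labelData num out u).detect (M.labelData num out v)} = M.profile u v := by
  ext e
  simp only [Set.mem_ofPred_eq, LabelData.detect, List.mem_append, List.mem_map,
    mem_detectFrom_labelData_iff hnum hout hv, mem_detectFrom_labelData_iff hnum hout hu, profile]
  constructor
  · rintro (⟨x, y, hy, hx, hyv, rfl⟩ | ⟨_, ⟨x, y, hy, hx, hyu, rfl⟩, rfl⟩)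
    · exact ⟨x, y, (hout x y hy).2, hx, hyv, rfl⟩
    · exact ⟨y, x, Sym2.eq_swap ▸ (hout x y hy).2, hyu, hx, by simp [Sym2.eq_swap]⟩
  · rintro ⟨x, y, he, hx, hy, rfl⟩
    obtain ⟨hx_node, hy_node, hxy, -⟩ := M.transversal _ he x y rfl
    rcases hcover x y hx_node hy_node ⟨fun h => hxy (h ▸ List.prefix_rfl), he⟩ with h | h
    · exact .inl ⟨x, y, h, hx, hy, rfl⟩
    · exact .inr ⟨_, ⟨y, x, h, hy, hx, rfl⟩, by simp [Sym2.eq_swap]⟩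

theorem fits_labelData {n d h : ℕ} (hcard : ∀ x, (out x).card ≤ d)
    (hout : ∀ x, ∀ y ∈ out x, M.auxGraph.Adj x y)
    (hnum : ∀ p, M.tree.IsNode p → num p < 2 * n) (hn : M.tree.leaves.length ≤ n)
    (hh : M.tree.depth ≤ h) (hu : M.tree.IsLeafPos u) :
    (M.labelData num out u).Fits n d h := by
  have hu_depth := hu.isNode.length_lt_depth
  have hlt : ∀ p, M.tree.IsNode p → p.length < 2 * n :=
    fun p hp => hp.length_lt_two_mul.trans_le (by omega)
  refine ⟨?_, ?_, ?_, ?_⟩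
  · simp only [labelData, List.length_map, List.length_inits]
    omega
  · simp only [labelData, List.length_flatMap, List.length_map, Finset.length_toList]
    calc ((u.inits.map fun x => (out x).card)).sum ≤ u.inits.length * d := by
          simpa using List.sum_le_card_nsmul (u.inits.map fun x => (out x).card) d (by simp [hcard])
      _ ≤ h * d := Nat.mul_le_mul_right d (by rw [List.length_inits]; omega)
  · simp only [labelData, List.mem_map, List.mem_inits]
    rintro _ ⟨x, hx, rfl⟩
    exact hnum x (hu.isNode.of_prefix hx)
  · simp only [labelData, List.mem_flatMap, List.mem_inits, List.mem_map, Finset.mem_toList]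
    rintro _ ⟨x, hx, y, hy, rfl⟩
    have hy_node : M.tree.IsNode y := isNode_snd_of_mem (hout x y hy).2
    exact ⟨hlt x (hu.isNode.of_prefix hx), hlt y hy_node, hnum y hy_node⟩

end Labeling

theorem exists_labelData {n d h : ℕ} (hw : M.WidthLE d) (hn : M.tree.leaves.length ≤ n)
    (hh : M.tree.depth ≤ h) :
    ∃ lab : Pos → LabelData,
      (∀ u v, M.tree.IsLeafPos u → M.tree.IsLeafPos v →
        (M.LeafAdj u v ↔ HasUndominatedEdge {e | e ∈ (lab u).detect (lab v)})) ∧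
      ∀ u, M.tree.IsLeafPos u → (lab u).Fits n d h := by
  obtain ⟨out, hcard, hout, hcover⟩ := DegenLE.exists_orientation hw M.tree.nodes.toFinset
  have hnum : Set.InjOn (M.tree.nodes.idxOf ·) {p | M.tree.IsNode p} :=
    fun p hp _ _ h => (List.idxOf_inj (BinTree.mem_nodes_iff.mpr hp)).mp h
  refine ⟨M.labelData (M.tree.nodes.idxOf ·) out, fun u v hu hv => ?_, fun u hu => ?_⟩
  · rw [detect_labelData hnum hout (fun x y hx hy => hcover x (by simpa [BinTree.mem_nodes_iff])
      y (by simpa [BinTree.mem_nodes_iff])) hu.isNode hv.isNode]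
    exact leafAdj_iff_hasUndominatedEdge hu hv
  · exact fits_labelData hcard hout
      (fun p hp => (BinTree.idxOf_nodes_lt_two_mul hp).trans_le (by omega)) hn hh hu

theorem Models.length_leaves_le {V : Type*} [Fintype V] {G : SimpleGraph V} (hM : M.Models G) :
    M.tree.leaves.length ≤ Fintype.card V := by
  classical
  obtain ⟨f, -, -, hsurj, -⟩ := hM
  calc M.tree.leaves.length = M.tree.leaves.toFinset.card :=
        (List.toFinset_card_of_nodup M.tree.nodup_leaves).symm
    _ ≤ (Finset.univ.image f).card := Finset.card_le_card fun p hp => by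
        obtain ⟨v, rfl⟩ := hsurj p (BinTree.mem_leaves_iff.mp (List.mem_toFinset.mp hp))
        exact Finset.mem_image_of_mem f (Finset.mem_univ v)
    _ ≤ Fintype.card V := Finset.card_image_le

end STM

/-- Adjacency labeling scheme of length `O(d · h · log n)` for `n`-vertex graphs admitting a
signed tree model of width at most `d` whose tree has depth at most `h`. -/
theorem stm_adjacency_labeling_scheme :
    ∃ C : ℝ, 0 < C ∧ ∃ D : List Bool → List Bool → Bool,
      ∀ n d h : ℕ, 2 ≤ n → 1 ≤ d → 1 ≤ h → ∀ G : SimpleGraph (Fin n),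
        (∃ M : STM, M.Models G ∧ M.WidthLE d ∧ M.tree.depth ≤ h) →
        ∃ ℓ : Fin n → List Bool,
          (∀ v : Fin n, ((ℓ v).length : ℝ) ≤ C * d * h * Real.logb 2 n) ∧
          ∀ u v : Fin n, u ≠ v → (D (ℓ u) (ℓ v) = true ↔ G.Adj u v) := by
  refine ⟨35, by norm_num, decoder, ?_⟩
  rintro n d h hn hd hh G ⟨M, hM, hw, hdepth⟩
  obtain ⟨lab, hlab, hfits⟩ := M.exists_labelData hw (by simpa using hM.length_leaves_le) hdepth
  obtain ⟨f, -, hleaf, -, hadj⟩ := hM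
  refine ⟨fun v => (lab (f v)).encode, fun v => (hfits _ (hleaf v)).length_encode_le hn hd hh,
    fun u v _ => ?_⟩
  rw [decoder_encode_eq_true_iff, hadj, hlab _ _ (hleaf u) (hleaf v)]
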